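/- For the distance function L(b) := Σ_{k=1}^p ∫ [Σ_{i=1}^n Σ_{t=1}^T d_{itk}(1{y_{it} − x_{it}'b ≤ z_t} − 1{−y_{it} + x_{it}'b < z_t})]² dH(z), where dH integrates each pair of coordinates z_s, z_t over ℝ with Lebesgue measure, one has the closed form L(b) = 4 Σ_{k=1}^p [Σ_{i=1}^n Σ_{t=1}^T d_{itk}(y_{it} − x_{it}'b)]². -/

import Mathlib

open MeasureTheory

/-! With `a = y - x'b`, each summand `1{a ≤ z} - 1{-a < z}` is, up to sign, the indicator of
the interval between `a` and `-a`, so it integrates to `-2a`. The integrand of the `k`-th term is a product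
`g_k(z) g_k(w)`, hence its iterated integral is `(∫ g_k)² = (-2 Σ d a)²`. -/

section StepDifference

open Set

variable (a c : ℝ)

theorem ite_le_sub_ite_lt_eq_indicator (z : ℝ) :
    ((if a ≤ z then (1:ℝ) else 0) - if c < z then 1 else 0) =
      (Icc a c).indicator 1 z - (Ioo c a).indicator 1 z := by
  by_cases ha : a ≤ z <;> by_cases hc : c < z <;>
    simp [indicator_apply, ha, hc, not_le, not_lt]

theorem integrable_indicator_one_Icc : Integrable ((Icc a c).indicator (1 : ℝ → ℝ)) :=
  (integrable_indicator_iff measurableSet_Icc).2 (integrableOn_const measure_Icc_lt_top.ne)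

theorem integrable_indicator_one_Ioo : Integrable ((Ioo c a).indicator (1 : ℝ → ℝ)) :=
  (integrable_indicator_iff measurableSet_Ioo).2 (integrableOn_const measure_Ioo_lt_top.ne)

theorem integrable_ite_le_sub_ite_lt :
    Integrable fun z : ℝ => (if a ≤ z then (1:ℝ) else 0) - if c < z then 1 else 0 := by
  simp only [ite_le_sub_ite_lt_eq_indicator]
  exact (integrable_indicator_one_Icc a c).sub (integrable_indicator_one_Ioo a c)

theorem integral_ite_le_sub_ite_lt :
    ∫ z : ℝ, ((if a ≤ z then (1:ℝ) else 0) - if c < z then 1 else 0) = c - a := by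
  simp only [ite_le_sub_ite_lt_eq_indicator]
  rw [integral_sub (integrable_indicator_one_Icc a c) (integrable_indicator_one_Ioo a c),
    integral_indicator_one measurableSet_Icc, integral_indicator_one measurableSet_Ioo,
    Real.volume_real_Icc, Real.volume_real_Ioo, ← neg_sub c a, max_zero_sub_eq_self]

end StepDifference

theorem integral_sum_mul_ite_le_sub_ite_lt {ι : Type*} (s : Finset ι) (w a c : ι → ℝ) :
    ∫ z : ℝ, ∑ i ∈ s, w i * ((if a i ≤ z then (1:ℝ) else 0) - if c i < z then 1 else 0) =
      ∑ i ∈ s, w i * (c i - a i) := by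
  rw [integral_finsetSum s fun i _ => (integrable_ite_le_sub_ite_lt (a i) (c i)).const_mul (w i)]
  simp only [integral_const_mul, integral_ite_le_sub_ite_lt]

theorem stmt2 (n T p : ℕ) (y : Fin n → Fin T → ℝ) (x : Fin n → Fin T → Fin p → ℝ)
    (d : Fin n → Fin T → Fin p → ℝ) (b : Fin p → ℝ) :
    (∑ k, ∫ w : ℝ, ∫ z : ℝ,
        (∑ i, ∑ t, d i t k *
          ((if y i t - ∑ j, x i t j * b j ≤ z then (1:ℝ) else 0) -
           (if -(y i t) + ∑ j, x i t j * b j < z then (1:ℝ) else 0))) *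
        (∑ i, ∑ t, d i t k *
          ((if y i t - ∑ j, x i t j * b j ≤ w then (1:ℝ) else 0) -
           (if -(y i t) + ∑ j, x i t j * b j < w then (1:ℝ) else 0))))
    = 4 * ∑ k, (∑ i, ∑ t, d i t k * (y i t - ∑ j, x i t j * b j))^2 := by
  obtain ⟨a, ha⟩ : ∃ a : Fin n → Fin T → ℝ, ∀ i t, y i t - ∑ j, x i t j * b j = a i t :=
    ⟨_, fun _ _ => rfl⟩
  have hneg (i : Fin n) (t : Fin T) : -(y i t) + ∑ j, x i t j * b j = -a i t := by
    rw [← ha]; ring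
  have hint (k : Fin p) :
      ∫ z : ℝ, ∑ i, ∑ t, d i t k * ((if a i t ≤ z then (1:ℝ) else 0) - if -a i t < z then 1 else 0)
        = -2 * ∑ i, ∑ t, d i t k * a i t := by
    simp only [← Fintype.sum_prod_type']
    rw [integral_sum_mul_ite_le_sub_ite_lt, Finset.mul_sum]
    exact Finset.sum_congr rfl fun q _ => by ring
  simp only [ha, hneg, integral_mul_const, integral_const_mul, hint]
  rw [Finset.mul_sum]
  exact Finset.sum_congr rfl fun k _ => by ring
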